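/- For each k ≥ 0, any ε > 0, and τ ∈ ℍ, the limit lim_{t→∞} Θ̂_{k,μ}(τ, τ + it + ε) = θ̃_{k,μ}(τ) holds, where Θ̂_{k,μ}(τ,w) = Σ_{n ∈ L+μ} n^k erf(−i√(πi(w−τ)) n) e^{πi n² τ} and θ̃_{k,μ}(τ) = Σ_{n ∈ L+μ} sgn(n) n^k e^{πi n² τ}. -/

import Mathlib

open Complex MeasureTheory Filter

/-- The error function `erf(z) = (2/√π) ∫₀^z e^{-t²} dt`, extended to complex arguments. -/
noncomputable def cerf (z : ℂ) : ℂ :=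
  (2 / Real.sqrt Real.pi) * z * ∫ t in (0 : ℝ)..1, Complex.exp (-((t : ℂ) * z) ^ 2)

/-- The bivariate (false) theta function `Θ̂_{k,μ}(τ,w)`. -/
noncomputable def ThetaHat (M : ℕ) (k : ℕ) (μ : ℝ) (τ w : ℂ) : ℂ :=
  ∑' n : ℤ, ((Real.sqrt M * n + μ : ℝ) : ℂ) ^ k *
    cerf (-Complex.I * (Real.pi * Complex.I * (w - τ)) ^ ((1 : ℂ) / 2) *
      ((Real.sqrt M * n + μ : ℝ) : ℂ)) *
    Complex.exp (Real.pi * Complex.I * ((Real.sqrt M * n + μ : ℝ) : ℂ) ^ 2 * τ)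

/-- The false theta function `θ̃_{k,μ}(τ)`. -/
noncomputable def thetaTilde (M : ℕ) (k : ℕ) (μ : ℝ) (τ : ℂ) : ℂ :=
  ∑' n : ℤ, (Real.sign (Real.sqrt M * n + μ) : ℂ) * ((Real.sqrt M * n + μ : ℝ) : ℂ) ^ k *
    Complex.exp (Real.pi * Complex.I * ((Real.sqrt M * n + μ : ℝ) : ℂ) ^ 2 * τ)

/-!
Put `w = τ + it + ε`. The `n`-th term of `Θ̂` involves `erf (c_t n)`, where `c_t = -i √(πi(it + ε))`
satisfies `c_t² = πt - πεi` and `Re c_t > 0`. For `Re z > 0` and `Re z² > 0` the Gaussian integral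
gives `1 - erf z = (2/√π) z ∫_1^∞ e^{-z²u²} du`, hence `|erf (c_t n) - sgn n| ≤ √2 √(1+ε) e^{-πtn²/2}`
for `t ≥ 1`, while `|erf z| ≤ |z| / √(Re z²) ≤ √(1+ε)` bounds every term by the summable majorant
`√(1+ε) |n|^k e^{-πn² Im τ}`. Dominated convergence for series concludes.
-/

open Real Set Topology

lemma integral_exp_neg_mul_sq_Ioi_one_le {b : ℝ} (hb : 0 < b) :
    ∫ u in Ioi 1, rexp (-b * u ^ 2) ≤ rexp (-b / 2) * (√(π / (b / 2)) / 2) := by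
  have hb2 : 0 < b / 2 := half_pos hb
  calc ∫ u in Ioi 1, rexp (-b * u ^ 2)
      ≤ ∫ u in Ioi 1, rexp (-b / 2) * rexp (-(b / 2) * u ^ 2) := by
        refine setIntegral_mono_on (integrable_exp_neg_mul_sq hb).integrableOn
          ((integrable_exp_neg_mul_sq hb2).const_mul _).integrableOn measurableSet_Ioi
          fun u (hu : 1 < u) => ?_
        -- `b u² ≥ b/2 + (b/2) u²` for `u ≥ 1`
        rw [← Real.exp_add, Real.exp_le_exp]
        nlinarith [mul_pos hb (by nlinarith : (0 : ℝ) < u ^ 2 - 1)]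
    _ = rexp (-b / 2) * ∫ u in Ioi 1, rexp (-(b / 2) * u ^ 2) := integral_const_mul _ _
    _ ≤ rexp (-b / 2) * ∫ u in Ioi 0, rexp (-(b / 2) * u ^ 2) := by
        refine mul_le_mul_of_nonneg_left ?_ (exp_pos _).le
        exact setIntegral_mono_set (integrable_exp_neg_mul_sq hb2).integrableOn
          (.of_forall fun _ => (exp_pos _).le) (Ioi_subset_Ioi zero_le_one).eventuallyLE
    _ = rexp (-b / 2) * (√(π / (b / 2)) / 2) := by rw [integral_gaussian_Ioi]

section Erf

variable {z : ℂ}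

lemma cerf_neg (z : ℂ) : cerf (-z) = -cerf z := by
  simp [cerf]

lemma cerf_eq_mul_integral (z : ℂ) :
    cerf z = 2 / √π * z * ∫ u in (0 : ℝ)..1, cexp (-z ^ 2 * u ^ 2) := by
  unfold cerf
  congr 1
  refine intervalIntegral.integral_congr fun u _ => ?_
  ring_nf

lemma norm_two_div_sqrt_pi : ‖(2 / √π : ℂ)‖ = 2 / √π := by
  rw [norm_div, Complex.norm_real, norm_of_nonneg (sqrt_nonneg π)]
  norm_num

lemma norm_cerf_le (hz : 0 < (z ^ 2).re) : ‖cerf z‖ ≤ ‖z‖ / √((z ^ 2).re) := by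
  have hint : ‖∫ u in (0 : ℝ)..1, cexp (-z ^ 2 * u ^ 2)‖ ≤ √(π / (z ^ 2).re) / 2 :=
    calc ‖∫ u in (0 : ℝ)..1, cexp (-z ^ 2 * u ^ 2)‖
        ≤ ∫ u in (0 : ℝ)..1, rexp (-(z ^ 2).re * u ^ 2) := by
          refine (intervalIntegral.norm_integral_le_integral_norm zero_le_one).trans_eq ?_
          simp only [norm_cexp_neg_mul_sq]
      _ ≤ ∫ u in Ioi 0, rexp (-(z ^ 2).re * u ^ 2) := by
          rw [intervalIntegral.integral_of_le zero_le_one]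
          exact setIntegral_mono_set (integrable_exp_neg_mul_sq hz).integrableOn
            (.of_forall fun _ => (exp_pos _).le) Ioc_subset_Ioi_self.eventuallyLE
      _ = √(π / (z ^ 2).re) / 2 := integral_gaussian_Ioi _
  calc ‖cerf z‖ ≤ 2 / √π * ‖z‖ * (√(π / (z ^ 2).re) / 2) := by
        rw [cerf_eq_mul_integral, norm_mul, norm_mul, norm_two_div_sqrt_pi]
        gcongr
    _ = ‖z‖ / √((z ^ 2).re) := by
        rw [sqrt_div pi_pos.le]
        field_simp

lemma eq_of_sq_eq_sq_of_re_nonneg {w v : ℂ} (hw : 0 ≤ w.re) (hv : 0 < v.re) (h : w ^ 2 = v ^ 2) :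
    w = v := by
  have hwv : w + v ≠ 0 := fun h0 => by
    have := congrArg re h0
    simp only [add_re, zero_re] at this
    linarith
  have : (w - v) * (w + v) = 0 := by linear_combination h
  exact sub_eq_zero.mp ((mul_eq_zero.mp this).resolve_right hwv)

lemma cpow_half_pi_div_sq (hz : 0 < z.re) : ((π : ℂ) / z ^ 2) ^ (1 / 2 : ℂ) = √π / z := by
  have hz0 : z ≠ 0 := fun h => by simp [h] at hz
  rw [one_div]
  refine eq_of_sq_eq_sq_of_re_nonneg (by rw [cpow_inv_two_re]; positivity) ?_ ?_
  · rw [div_eq_mul_inv, re_ofReal_mul, inv_re]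
    have := normSq_pos.mpr hz0
    positivity
  · rw [cpow_ofNat_inv_pow, div_pow, ← ofReal_pow, sq_sqrt pi_pos.le]

lemma one_sub_cerf_eq (hz : 0 < z.re) (hz2 : 0 < (z ^ 2).re) :
    1 - cerf z = 2 / √π * z * ∫ u : ℝ in Ioi 1, cexp (-z ^ 2 * u ^ 2) := by
  have hz0 : z ≠ 0 := fun h => by simp [h] at hz
  have hint := integrable_cexp_neg_mul_sq hz2
  have hsplit := intervalIntegral.integral_interval_add_Ioi (a := 0) (b := 1) hint.integrableOn
    hint.integrableOn
  rw [integral_gaussian_complex_Ioi hz2, cpow_half_pi_div_sq hz] at hsplit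
  rw [cerf_eq_mul_integral, ← sub_eq_of_eq_add' hsplit.symm]
  have : (√π : ℂ) ≠ 0 := ofReal_ne_zero.mpr (sqrt_pos.mpr pi_pos).ne'
  field_simp

lemma norm_one_sub_cerf_le (hz : 0 < z.re) (hz2 : 0 < (z ^ 2).re) :
    ‖1 - cerf z‖ ≤ √2 * (‖z‖ / √((z ^ 2).re)) * rexp (-(z ^ 2).re / 2) := by
  set a := (z ^ 2).re
  have hint : ‖∫ u : ℝ in Ioi 1, cexp (-z ^ 2 * u ^ 2)‖ ≤ rexp (-a / 2) * (√(π / (a / 2)) / 2) :=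
    calc ‖∫ u : ℝ in Ioi 1, cexp (-z ^ 2 * u ^ 2)‖ ≤ ∫ u in Ioi 1, rexp (-a * u ^ 2) := by
          refine (norm_integral_le_integral_norm _).trans_eq ?_
          simp only [norm_cexp_neg_mul_sq, a]
      _ ≤ _ := integral_exp_neg_mul_sq_Ioi_one_le hz2
  calc ‖1 - cerf z‖ ≤ 2 / √π * ‖z‖ * (rexp (-a / 2) * (√(π / (a / 2)) / 2)) := by
        rw [one_sub_cerf_eq hz hz2, norm_mul, norm_mul, norm_two_div_sqrt_pi]
        gcongr
    _ = √2 * (‖z‖ / √a) * rexp (-a / 2) := by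
        rw [div_div_eq_mul_div, sqrt_div' _ hz2.le, sqrt_mul pi_pos.le]
        field_simp

end Erf

section Scale

variable {ε t : ℝ}

-- The argument of `erf` in the `n`-th term of `ThetaHat` at `w = τ + it + ε` is `erfScale ε t * n`.
noncomputable def erfScale (ε t : ℝ) : ℂ := -I * (π * I * (I * t + ε)) ^ ((1 : ℂ) / 2)

lemma erfScale_sq : erfScale ε t ^ 2 = π * t - π * ε * I := by
  rw [erfScale, mul_pow, one_div, cpow_ofNat_inv_pow]
  linear_combination (π * t * (I ^ 2 - 1) + π * ε * I) * I_sq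

lemma re_sq_erfScale_mul (x : ℝ) : ((erfScale ε t * x) ^ 2).re = π * t * x ^ 2 := by
  rw [mul_pow, erfScale_sq, ← ofReal_pow, re_mul_ofReal]
  simp

lemma erfScale_re_pos (hε : 0 < ε) : 0 < (erfScale ε t).re := by
  set s : ℂ := π * I * (I * t + ε)
  have hs : s.im = π * ε := by simp [s]
  have hre : s.re < ‖s‖ :=
    (le_abs_self _).trans_lt (abs_re_lt_norm.mpr (by rw [hs]; positivity))
  rw [erfScale, neg_mul, neg_re, I_mul_re, neg_neg, one_div,
    cpow_inv_two_im_eq_sqrt (by rw [hs]; positivity)]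
  exact sqrt_pos.mpr (by linarith)

lemma norm_erfScale_sq_le (hε : 0 ≤ ε) (ht : 0 ≤ t) : ‖erfScale ε t‖ ^ 2 ≤ π * (t + ε) := by
  rw [← norm_pow, erfScale_sq]
  refine (norm_le_abs_re_add_abs_im _).trans_eq ?_
  simp [abs_of_nonneg, ht, hε, pi_pos.le, mul_add]

lemma norm_erfScale_mul_div_le (hε : 0 < ε) (ht : 1 ≤ t) {x : ℝ} (hx : x ≠ 0) :
    ‖erfScale ε t * x‖ / √(((erfScale ε t * x) ^ 2).re) ≤ √(1 + ε) := by
  have hπt : 0 < √(π * t) := sqrt_pos.mpr (by positivity)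
  have hc := norm_erfScale_sq_le hε.le (by linarith : (0 : ℝ) ≤ t)
  rw [re_sq_erfScale_mul, sqrt_mul (by positivity), sqrt_sq_eq_abs, norm_mul, norm_real,
    norm_eq_abs, mul_div_mul_right _ _ (abs_pos.mpr hx).ne', div_le_iff₀ hπt,
    ← sqrt_mul (by positivity), le_sqrt (norm_nonneg _) (by positivity)]
  nlinarith [mul_le_mul_of_nonneg_left ht (by positivity : 0 ≤ π * ε)]

lemma norm_cerf_erfScale_mul_le (hε : 0 < ε) (ht : 1 ≤ t) (x : ℝ) :
    ‖cerf (erfScale ε t * x)‖ ≤ √(1 + ε) := by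
  rcases eq_or_ne x 0 with rfl | hx
  · simp [cerf]
  · refine (norm_cerf_le ?_).trans (norm_erfScale_mul_div_le hε ht hx)
    rw [re_sq_erfScale_mul]
    have := pi_pos
    positivity

lemma tendsto_cerf_erfScale_mul_of_pos (hε : 0 < ε) {x : ℝ} (hx : 0 < x) :
    Tendsto (fun t => cerf (erfScale ε t * x)) atTop (𝓝 1) := by
  have hdecay : Tendsto (fun t => √2 * √(1 + ε) * rexp (-(π * x ^ 2 / 2 * t))) atTop (𝓝 0) := by
    simpa using (tendsto_exp_neg_atTop_nhds_zero.comp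
      (tendsto_id.const_mul_atTop (by positivity : 0 < π * x ^ 2 / 2))).const_mul (√2 * √(1 + ε))
  rw [tendsto_iff_norm_sub_tendsto_zero]
  refine squeeze_zero' (.of_forall fun _ => norm_nonneg _) ?_ hdecay
  filter_upwards [eventually_ge_atTop 1] with t ht
  have hre : 0 < (erfScale ε t * x).re := by
    rw [re_mul_ofReal]
    exact mul_pos (erfScale_re_pos hε) hx
  have hre2 : 0 < ((erfScale ε t * x) ^ 2).re := by
    rw [re_sq_erfScale_mul]
    have := pi_pos
    positivity
  have hratio := norm_erfScale_mul_div_le hε ht hx.ne'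
  rw [norm_sub_rev]
  refine (norm_one_sub_cerf_le hre hre2).trans ?_
  rw [re_sq_erfScale_mul] at hratio ⊢
  gcongr
  linarith

lemma tendsto_cerf_erfScale_mul (hε : 0 < ε) (x : ℝ) :
    Tendsto (fun t => cerf (erfScale ε t * x)) atTop (𝓝 (Real.sign x : ℂ)) := by
  rcases lt_trichotomy x 0 with hx | rfl | hx
  · have hneg : ∀ t, cerf (erfScale ε t * x) = -cerf (erfScale ε t * (-x : ℝ)) := fun t => by
      rw [← cerf_neg]
      push_cast
      ring_nf
    simpa [hneg, Real.sign_of_neg hx] using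
      (tendsto_cerf_erfScale_mul_of_pos hε (neg_pos.mpr hx)).neg
  · simp [cerf]
  · simpa [Real.sign_of_pos hx] using tendsto_cerf_erfScale_mul_of_pos hε hx

end Scale

lemma norm_cexp_pi_mul_I_sq_mul (x : ℝ) (τ : ℂ) :
    ‖cexp (π * I * (x : ℂ) ^ 2 * τ)‖ = rexp (-(π * x ^ 2 * τ.im)) := by
  rw [Complex.norm_exp]
  simp [mul_re, mul_im, ← ofReal_pow]

theorem tendsto_tsum_cerf_erfScale {β : Type*} {x : β → ℝ} {k : ℕ} {ε : ℝ} {τ : ℂ} (hε : 0 < ε)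
    (hx : Summable fun n => |x n| ^ k * rexp (-(π * x n ^ 2 * τ.im))) :
    Tendsto (fun t : ℝ => ∑' n, (x n : ℂ) ^ k * cerf (erfScale ε t * x n) *
        cexp (π * I * (x n : ℂ) ^ 2 * τ))
      atTop (𝓝 (∑' n, (Real.sign (x n) : ℂ) * (x n : ℂ) ^ k *
        cexp (π * I * (x n : ℂ) ^ 2 * τ))) := by
  refine tendsto_tsum_of_dominated_convergence (hx.mul_left √(1 + ε)) (fun n => ?_) ?_
  · convert ((tendsto_cerf_erfScale_mul hε (x n)).const_mul ((x n : ℂ) ^ k)).mul_const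
      (cexp (π * I * (x n : ℂ) ^ 2 * τ)) using 2
    ring
  · filter_upwards [eventually_ge_atTop 1] with t ht n
    rw [norm_mul, norm_mul, norm_pow, norm_real, norm_eq_abs, norm_cexp_pi_mul_I_sq_mul]
    calc |x n| ^ k * ‖cerf (erfScale ε t * x n)‖ * rexp (-(π * x n ^ 2 * τ.im))
        ≤ |x n| ^ k * √(1 + ε) * rexp (-(π * x n ^ 2 * τ.im)) := by
          gcongr
          exact norm_cerf_erfScale_mul_le hε ht _
      _ = √(1 + ε) * (|x n| ^ k * rexp (-(π * x n ^ 2 * τ.im))) := by ring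

lemma summable_abs_pow_mul_exp_neg_sq {c : ℝ} (hc : 0 < c) (μ : ℝ) (k : ℕ) {y : ℝ} (hy : 0 < y) :
    Summable fun n : ℤ => |c * n + μ| ^ k * rexp (-(π * (c * n + μ) ^ 2 * y)) := by
  refine ((HurwitzKernelBounds.summable_f_int k (μ / c) (by positivity : 0 < c ^ 2 * y)).mul_left
    (c ^ k)).congr fun n => ?_
  have hcn : c * n + μ = c * (n + μ / c) := by field_simp
  simp only [HurwitzKernelBounds.f_int, hcn, abs_mul, mul_pow, abs_of_pos hc]
  ring_nf

lemma thetaHat_add_I_mul_add (M k : ℕ) (μ : ℝ) (τ : ℂ) (ε t : ℝ) :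
    ThetaHat M k μ τ (τ + I * t + ε) = ∑' n : ℤ, ((√M * n + μ : ℝ) : ℂ) ^ k *
      cerf (erfScale ε t * (√M * n + μ : ℝ)) * cexp (π * I * ((√M * n + μ : ℝ) : ℂ) ^ 2 * τ) := by
  rw [ThetaHat, add_assoc, add_sub_cancel_left]
  rfl

theorem thetaHat_limit (M : ℕ) (hM : 0 < M) (μ : ℝ) (k : ℕ) (ε : ℝ) (hε : 0 < ε)
    (τ : ℂ) (hτ : 0 < τ.im) :
    Tendsto (fun t : ℝ => ThetaHat M k μ τ (τ + Complex.I * t + ε)) atTop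
      (nhds (thetaTilde M k μ τ)) := by
  simp only [thetaHat_add_I_mul_add]
  exact tendsto_tsum_cerf_erfScale hε
    (summable_abs_pow_mul_exp_neg_sq (sqrt_pos.mpr (Nat.cast_pos.mpr hM)) μ k hτ)
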